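/- arXiv:1309.4174 — 2 statements merged into one kernel-verified Lean document; each statement's English description precedes it below -/
import Mathlib

section
/- Let f and g be Weierstrass (distinguished) polynomials in Zp[T] and let a, b be non-negative integers. If p^a·f and p^b·g generate the same ideal in the power series ring Zp[[T]], then a = b, the ideals (f) and (g) of Zp[[T]] are equal, and deg f = deg g. -/
/-!
Reduce modulo `p` coefficientwise, `ℤ_[p]⟦X⟧ → 𝔽_p⟦X⟧`. This kills `p` and sends a Weierstrass
polynomial of degree `n` to `X ^ n`, which is nonzero. So if `p ^ a * f` and `p ^ b * g` are
associated with `a < b`, cancelling `p ^ a` leaves `f` associated to a multiple of `p`, whose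
reduction vanishes; hence `a = b`, then `f` and `g` are associated, and so are `X ^ deg f` and
`X ^ deg g`.
-/

open PowerSeries

/-- A Weierstrass (distinguished) polynomial with respect to `π`:
a monic polynomial all of whose lower coefficients are divisible by `π`. -/
def Polynomial.IsWeierstrassAt {R : Type*} [CommRing R] (f : Polynomial R) (π : R) : Prop :=
  f.Monic ∧ ∀ i < f.natDegree, π ∣ f.coeff i

section PowMulAssociated

variable {A B F : Type*} [CommMonoidWithZero A] [IsCancelMulZero A] [MonoidWithZero B]
  [FunLike F A B] [MonoidWithZeroHomClass F A B] (ψ : F) {π x y : A} {a b : ℕ}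

theorem le_of_pow_mul_associated_pow_mul (hπ : π ≠ 0) (hψπ : ψ π = 0) (hx : ψ x ≠ 0)
    (h : Associated (π ^ a * x) (π ^ b * y)) : b ≤ a := by
  by_contra! hab
  obtain ⟨k, rfl⟩ := Nat.exists_eq_add_of_lt hab
  have hxy : Associated x (π ^ (k + 1) * y) := by
    rw [show a + k + 1 = a + (k + 1) by ring, pow_add, mul_assoc] at h
    exact h.of_mul_left (Associated.refl _) (pow_ne_zero a hπ)
  have hψxy := hxy.map ψ
  rw [map_mul, map_pow, hψπ, zero_pow k.succ_ne_zero, zero_mul] at hψxy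
  exact hx (hψxy.eq_zero_iff.mpr rfl)

theorem eq_and_associated_of_pow_mul_associated_pow_mul (hπ : π ≠ 0) (hψπ : ψ π = 0)
    (hx : ψ x ≠ 0) (hy : ψ y ≠ 0) (h : Associated (π ^ a * x) (π ^ b * y)) :
    a = b ∧ Associated x y := by
  obtain rfl : a = b := le_antisymm (le_of_pow_mul_associated_pow_mul ψ hπ hψπ hy h.symm)
    (le_of_pow_mul_associated_pow_mul ψ hπ hψπ hx h)
  exact ⟨rfl, h.of_mul_left (Associated.refl _) (pow_ne_zero a hπ)⟩

end PowMulAssociated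

theorem Polynomial.IsWeierstrassAt.map_eq_X_pow {R S : Type*} [CommRing R] [CommRing S]
    {f : Polynomial R} {π : R} (hf : f.IsWeierstrassAt π) (φ : R →+* S) (hφπ : φ π = 0) :
    f.map φ = Polynomial.X ^ f.natDegree := by
  ext n
  rw [Polynomial.coeff_map, Polynomial.coeff_X_pow]
  rcases lt_trichotomy n f.natDegree with hn | rfl | hn
  · obtain ⟨c, hc⟩ := hf.2 n hn
    rw [if_neg hn.ne, hc, map_mul, hφπ, zero_mul]
  · rw [if_pos rfl, hf.1.coeff_natDegree, map_one]
  · rw [if_neg hn.ne', Polynomial.coeff_eq_zero_of_natDegree_lt hn, map_zero]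

theorem PowerSeries.X_pow_associated_X_pow_iff {R : Type*} [CommRing R] [IsDomain R] {m n : ℕ} :
    Associated ((X : R⟦X⟧) ^ m) (X ^ n) ↔ m = n := by
  refine ⟨fun h => le_antisymm ?_ ?_, fun h => h ▸ Associated.refl _⟩
  · exact (pow_dvd_pow_iff X_ne_zero X_prime.not_isUnit).mp h.dvd
  · exact (pow_dvd_pow_iff X_ne_zero X_prime.not_isUnit).mp h.symm.dvd

/-- If p^a·f and p^b·g generate the same ideal of ℤp[[T]], with f, g Weierstrass
polynomials, then a = b, (f) = (g), and deg f = deg g. -/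
theorem weierstrass_span_eq_iff (p : ℕ) [Fact p.Prime] (f g : Polynomial ℤ_[p])
    (hf : f.IsWeierstrassAt (p : ℤ_[p])) (hg : g.IsWeierstrassAt (p : ℤ_[p]))
    (a b : ℕ)
    (h : Ideal.span {(p : PowerSeries ℤ_[p]) ^ a * (f : PowerSeries ℤ_[p])} =
         Ideal.span {(p : PowerSeries ℤ_[p]) ^ b * (g : PowerSeries ℤ_[p])}) :
    a = b ∧
      Ideal.span {(f : PowerSeries ℤ_[p])} = Ideal.span {(g : PowerSeries ℤ_[p])} ∧
      f.natDegree = g.natDegree := by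
  let ψ : ℤ_[p]⟦X⟧ →+* (ZMod p)⟦X⟧ := PowerSeries.map PadicInt.toZMod
  have hψp : ψ p = 0 := by
    rw [map_natCast, ← map_natCast (C (R := ZMod p)), ZMod.natCast_self, map_zero]
  have hψ {w : Polynomial ℤ_[p]} (hw : w.IsWeierstrassAt (p : ℤ_[p])) :
      ψ w = X ^ w.natDegree := by
    rw [← Polynomial.polynomial_map_coe, hw.map_eq_X_pow _ (by simp), Polynomial.coe_pow,
      Polynomial.coe_X]
  have hp : (p : ℤ_[p]⟦X⟧) ≠ 0 := by
    rw [← map_natCast (C (R := ℤ_[p])), Ne, map_eq_zero_iff _ C_injective]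
    exact_mod_cast (Fact.out : p.Prime).ne_zero
  rw [Ideal.span_singleton_eq_span_singleton] at h ⊢
  obtain ⟨rfl, hfg⟩ := eq_and_associated_of_pow_mul_associated_pow_mul ψ hp hψp
    (hψ hf ▸ pow_ne_zero _ X_ne_zero) (hψ hg ▸ pow_ne_zero _ X_ne_zero) h
  have hXX := hfg.map ψ
  rw [hψ hf, hψ hg] at hXX
  exact ⟨rfl, hfg, X_pow_associated_X_pow_iff.mp hXX⟩
end

section
/- If f is a Weierstrass polynomial in Zp[T] of degree n, then the quotient Zp[[T]]/(f) is a free Zp-module of rank n; in particular rank_{Zp} Zp[[T]]/(f) = deg f. -/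
/-!
Since `ℤ_[p]` is `p`-adically complete, Weierstrass division by `f` shows that the natural map
`ℤ_[p][T] ⧸ (f) → ℤ_[p]⟦T⟧ ⧸ (f)` is an isomorphism, and for monic `f` of degree `n` the left side
has the basis `1, T, …, T ^ (n - 1)`.
-/

open PowerSeries

theorem Polynomial.IsWeierstrassAt.isDistinguishedAt {R : Type*} [CommRing R] {f : Polynomial R}
    {π : R} (hf : f.IsWeierstrassAt π) : f.IsDistinguishedAt (Ideal.span {π}) :=
  ⟨⟨fun hi ↦ Ideal.mem_span_singleton.2 (hf.2 _ hi)⟩, hf.1⟩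

namespace Polynomial.IsDistinguishedAt

variable {A : Type*} [CommRing A] {g : Polynomial A} {I : Ideal A} [IsAdicComplete I A]

noncomputable def basisPowerSeriesQuotient (H : g.IsDistinguishedAt I) :
    Module.Basis (Fin g.natDegree) A (A⟦X⟧ ⧸ Ideal.span {(g : A⟦X⟧)}) :=
  (AdjoinRoot.powerBasis' H.monic).basis.map H.algEquivQuotient.toLinearEquiv

theorem free_powerSeries_quotient (H : g.IsDistinguishedAt I) :
    Module.Free A (A⟦X⟧ ⧸ Ideal.span {(g : A⟦X⟧)}) :=
  .of_basis H.basisPowerSeriesQuotient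

theorem finrank_powerSeries_quotient [StrongRankCondition A] (H : g.IsDistinguishedAt I) :
    Module.finrank A (A⟦X⟧ ⧸ Ideal.span {(g : A⟦X⟧)}) = g.natDegree := by
  rw [Module.finrank_eq_card_basis H.basisPowerSeriesQuotient, Fintype.card_fin]

end Polynomial.IsDistinguishedAt

/-- If f is a Weierstrass polynomial of degree n over ℤp, then ℤp[[T]]/(f)
is a free ℤp-module of rank n. -/
theorem quotient_weierstrass_free_rank (p : ℕ) [Fact p.Prime] (f : Polynomial ℤ_[p])
    (hf : f.IsWeierstrassAt (p : ℤ_[p])) (n : ℕ) (hn : f.natDegree = n) :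
    Module.Free ℤ_[p] (PowerSeries ℤ_[p] ⧸ Ideal.span {(f : PowerSeries ℤ_[p])}) ∧
      Module.finrank ℤ_[p] (PowerSeries ℤ_[p] ⧸ Ideal.span {(f : PowerSeries ℤ_[p])}) = n := by
  have H : f.IsDistinguishedAt (IsLocalRing.maximalIdeal ℤ_[p]) := by
    rw [PadicInt.maximalIdeal_eq_span_p]
    exact hf.isDistinguishedAt
  exact ⟨H.free_powerSeries_quotient, hn ▸ H.finrank_powerSeries_quotient⟩
end
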